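/- Let d be a finite set of tuples of type τ with attribute maps lhs : τ → α and rhs : τ → β, let Q be a predicate on β, and let A = {t ∈ d | Q (rhs t)} be the answer of a select query filtering on the rhs attribute of the FD lhs → rhs. Then every tuple of d whose rhs value occurs among the rhs values of tuples of A already belongs to A; consequently the one-step relaxation of A equals A together with only the lhs-matching tuples: A ∪ {t ∈ d | lhs t ∈ lhs '' A ∨ rhs t ∈ rhs '' A} = A ∪ {t ∈ d | lhs t ∈ lhs '' A}. Hence the query-result relaxation algorithm requires one iteration to enable accurate candidate fixes for SP queries with a filter on the rhs of an FD. -/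

import Mathlib

namespace Finset

variable {τ β : Type*}

theorem mem_filter_comp_of_mem_image_filter [DecidableEq β] {d : Finset τ} {f : τ → β}
    {Q : β → Prop} [DecidablePred Q] {t : τ} (ht : t ∈ d)
    (hft : f t ∈ (d.filter (fun s => Q (f s))).image f) :
    t ∈ d.filter (fun s => Q (f s)) := by
  obtain ⟨s, hs, hst⟩ := mem_image.mp hft
  exact mem_filter.mpr ⟨ht, hst ▸ (mem_filter.mp hs).2⟩

theorem union_filter_or_eq_of_forall_mem [DecidableEq τ] {A d : Finset τ} {p q : τ → Prop}
    [DecidablePred p] [DecidablePred q] (hq : ∀ t ∈ d, q t → t ∈ A) :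
    A ∪ d.filter (fun t => p t ∨ q t) = A ∪ d.filter p := by
  ext t
  simp only [mem_union, mem_filter]
  constructor
  · rintro (htA | ⟨ht, hp | hq'⟩)
    · exact .inl htA
    · exact .inr ⟨ht, hp⟩
    · exact .inl (hq t ht hq')
  · rintro (htA | ⟨ht, hp⟩)
    · exact .inl htA
    · exact .inr ⟨ht, .inl hp⟩

end Finset

/-- For an SP query filtering on the rhs of an FD `lhs → rhs`, every tuple of `d`
whose rhs value occurs among the rhs values of the answer `A` already belongs to `A`, and hence
the one-step relaxation of `A` equals `A` together with only the lhs-matching tuples; so the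
relaxation algorithm needs one iteration. -/
theorem sp_rhs_filter_one_iteration
    {τ α β : Type*} [DecidableEq τ] [DecidableEq α] [DecidableEq β]
    (d : Finset τ) (lhs : τ → α) (rhs : τ → β)
    (Q : β → Prop) [DecidablePred Q]
    (A : Finset τ) (hA : A = d.filter (fun t => Q (rhs t))) :
    (∀ t ∈ d, rhs t ∈ A.image rhs → t ∈ A) ∧
    A ∪ d.filter (fun t => lhs t ∈ A.image lhs ∨ rhs t ∈ A.image rhs)
      = A ∪ d.filter (fun t => lhs t ∈ A.image lhs) := by
  have rhs_closed : ∀ t ∈ d, rhs t ∈ A.image rhs → t ∈ A := by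
    subst hA
    exact fun t ht => Finset.mem_filter_comp_of_mem_image_filter ht
  exact ⟨rhs_closed, Finset.union_filter_or_eq_of_forall_mem rhs_closed⟩
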